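/- For monotonic HT consequence, the closed-world and open-world definitions coincide: for a theory Π in language L and formula φ in L' ⊇ L, φ is true in every HT(L ∪ V(φ))-model of Π iff φ is true in every expansion to L ∪ V(φ) of every HT(L)-model of Π. -/

import Mathlib

/-- Propositional formulas over atoms ℕ. -/
inductive Fm where
  | atom : ℕ → Fm
  | bot  : Fm
  | and  : Fm → Fm → Fm
  | or   : Fm → Fm → Fm
  | imp  : Fm → Fm → Fm
deriving DecidableEq

def Fm.neg (φ : Fm) : Fm := Fm.imp φ Fm.bot
def Fm.top : Fm := Fm.imp Fm.bot Fm.bot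

/-- Truth at the "there" world (classical truth in T). -/
def satT (T : Set ℕ) : Fm → Prop
  | .atom a  => a ∈ T
  | .bot     => False
  | .and φ ψ => satT T φ ∧ satT T ψ
  | .or φ ψ  => satT T φ ∨ satT T ψ
  | .imp φ ψ => satT T φ → satT T ψ

/-- Truth at the "here" world of the HT-interpretation ⟨H,T⟩. -/
def satH (H T : Set ℕ) : Fm → Prop
  | .atom a  => a ∈ H
  | .bot     => False
  | .and φ ψ => satH H T φ ∧ satH H T ψ
  | .or φ ψ  => satH H T φ ∨ satH H T ψ
  | .imp φ ψ => (satH H T φ → satH H T ψ) ∧ (satT T φ → satT T ψ)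

/-- ⟨H,T⟩ is an HT-model of φ (true at both worlds). -/
def htSat (H T : Set ℕ) (φ : Fm) : Prop := satH H T φ ∧ satT T φ

/-- ⟨H,T⟩ is an HT-model of the theory Γ. -/
def htSatTh (H T : Set ℕ) (Γ : Set Fm) : Prop := ∀ φ ∈ Γ, htSat H T φ

/-- Atoms occurring in a formula. -/
def vars : Fm → Finset ℕ
  | .atom a  => {a}
  | .bot     => ∅
  | .and φ ψ => vars φ ∪ vars ψ
  | .or φ ψ  => vars φ ∪ vars ψ
  | .imp φ ψ => vars φ ∪ vars ψ

/-- Atoms occurring in a theory. -/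
def varsTh (Γ : Set Fm) : Set ℕ := ⋃ φ ∈ Γ, (vars φ : Set ℕ)

/-- HT-consequence: every world of every HT-interpretation making all of Γ true makes φ true. -/
def htConseqTh (Γ : Set Fm) (φ : Fm) : Prop :=
  ∀ H T : Set ℕ, H ⊆ T →
    ((∀ ψ ∈ Γ, satH H T ψ) → satH H T φ) ∧ ((∀ ψ ∈ Γ, satT T ψ) → satT T φ)

/-- ⟨T,T⟩ is an equilibrium model of Γ over vocabulary V. -/
def eqModel (V : Set ℕ) (Γ : Set Fm) (T : Set ℕ) : Prop :=
  T ⊆ V ∧ htSatTh T T Γ ∧ ∀ H : Set ℕ, H ⊆ T → H ≠ T → ¬ htSatTh H T Γ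

def bigAnd (l : List Fm) : Fm := l.foldr Fm.and Fm.top
def bigOr (l : List Fm) : Fm := l.foldr Fm.or Fm.bot
noncomputable def conjAtoms (s : Finset ℕ) : Fm := bigAnd (s.toList.map Fm.atom)
noncomputable def disjAtoms (s : Finset ℕ) : Fm := bigOr (s.toList.map Fm.atom)
/-- δ_T over vocabulary V : (⋀_{a∈T} a) ∧ ¬(⋁_{a∈V∖T} a). -/
noncomputable def delta (V T : Finset ℕ) : Fm := Fm.and (conjAtoms T) (Fm.neg (disjAtoms (V \ T)))

/-! HT-satisfaction of a formula only depends on the atoms occurring in it, so an interpretation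
and its restriction to `L` agree on every formula of `Γ`. Hence every expansion of an HT(L)-model
of `Γ` is a model of `Γ`, and every model of `Γ` is an expansion of its restriction to `L`. -/

theorem satT_inter_iff {S : Set ℕ} (T : Set ℕ) {ψ : Fm} (h : (vars ψ : Set ℕ) ⊆ S) :
    satT (T ∩ S) ψ ↔ satT T ψ := by
  induction ψ with
  | atom a => exact and_iff_left (h (Finset.mem_singleton_self a))
  | bot => rfl
  | and φ ψ ihφ ihψ | or φ ψ ihφ ihψ | imp φ ψ ihφ ihψ =>
    rw [vars, Finset.coe_union, Set.union_subset_iff] at h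
    simp only [satT, ihφ h.1, ihψ h.2]

theorem satH_inter_iff {S : Set ℕ} (H T : Set ℕ) {ψ : Fm} (h : (vars ψ : Set ℕ) ⊆ S) :
    satH (H ∩ S) (T ∩ S) ψ ↔ satH H T ψ := by
  induction ψ with
  | atom a => exact and_iff_left (h (Finset.mem_singleton_self a))
  | bot => rfl
  | and φ ψ ihφ ihψ | or φ ψ ihφ ihψ =>
    rw [vars, Finset.coe_union, Set.union_subset_iff] at h
    simp only [satH, ihφ h.1, ihψ h.2]
  | imp φ ψ ihφ ihψ =>
    rw [vars, Finset.coe_union, Set.union_subset_iff] at h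
    simp only [satH, ihφ h.1, ihψ h.2, satT_inter_iff T h.1, satT_inter_iff T h.2]

theorem htSat_inter_iff {S : Set ℕ} (H T : Set ℕ) {ψ : Fm} (h : (vars ψ : Set ℕ) ⊆ S) :
    htSat (H ∩ S) (T ∩ S) ψ ↔ htSat H T ψ :=
  and_congr (satH_inter_iff H T h) (satT_inter_iff T h)

theorem vars_subset_varsTh {Γ : Set Fm} {ψ : Fm} (hψ : ψ ∈ Γ) : (vars ψ : Set ℕ) ⊆ varsTh Γ :=
  Set.subset_biUnion_of_mem (u := fun φ => (vars φ : Set ℕ)) hψ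

theorem htSatTh_inter_iff {S : Set ℕ} (H T : Set ℕ) {Γ : Set Fm} (h : varsTh Γ ⊆ S) :
    htSatTh (H ∩ S) (T ∩ S) Γ ↔ htSatTh H T Γ :=
  forall₂_congr fun _ hψ => htSat_inter_iff H T ((vars_subset_varsTh hψ).trans h)

/-- for monotonic HT consequence the closed-world and open-world
definitions coincide. -/
theorem ht_cw_eq_ow (L : Set ℕ) (Γ : Set Fm) (hΓ : varsTh Γ ⊆ L) (φ : Fm) :
    (∀ H T : Set ℕ, H ⊆ T → T ⊆ L ∪ (vars φ : Set ℕ) → htSatTh H T Γ → htSat H T φ) ↔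
    (∀ H T : Set ℕ, H ⊆ T → T ⊆ L → htSatTh H T Γ →
      ∀ H' T' : Set ℕ, H' ⊆ T' → T' ⊆ L ∪ (vars φ : Set ℕ) →
        H' ∩ L = H → T' ∩ L = T → htSat H' T' φ) := by
  constructor
  · rintro hcw _ _ - - hΓL H' T' hH'T' hT' rfl rfl
    exact hcw H' T' hH'T' hT' ((htSatTh_inter_iff H' T' hΓ).1 hΓL)
  · intro how H T hHT hT hΓHT
    exact how (H ∩ L) (T ∩ L) (Set.inter_subset_inter_left L hHT) Set.inter_subset_right
      ((htSatTh_inter_iff H T hΓ).2 hΓHT) H T hHT hT rfl rfl
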